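/- arXiv:1605.01009 — 8 statements merged into one kernel-verified Lean document; each statement's English description precedes it below -/
import Mathlib

section
/- Let n ≥ 1 and let X, Y be real n×n matrices. Assume that Y is symmetric and invertible and that, counted with multiplicity, exactly one eigenvalue of Y is negative and the remaining n−1 eigenvalues are positive. Assume also that the symmetric part (X + Xᵀ)/2 is positive definite. Then the product XY has exactly one negative real eigenvalue with one-dimensional eigenspace; precisely: (i) there exist μ > 0 and a nonzero vector u ∈ ℝⁿ with (XY)u = −μu, and (ii) there do not exist linearly independent vectors u, w ∈ ℝⁿ and reals a, b > 0 with (XY)u = −au and (XY)w = −bw. -/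
/-!
The symmetric part of `X` being positive definite, `X` has no eigenvector with eigenvalue `≤ 0`,
so `det X > 0`; as `det Y < 0`, `det (X Y) < 0` and the monic polynomial `det (t + X Y)` has a
positive root.

If `u, w` were independent eigenvectors of `M = X Y` with eigenvalues `-a, -b < 0`, then for
`z = s u + t w` and `z' = b s u + a t w` we have `M z' = -a b z` and `(a + b) z = z' - M z`, whence
`a b (a + b) zᵀ Y z = -(a b (Y z)ᵀ X (Y z) + (Y z')ᵀ X (Y z')) ≤ 0`.
So `Y` would be negative semidefinite on a plane, yet it is positive definite on a hyperplane.
-/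

open Matrix Filter

theorem exists_ne_zero_mem_span_pair_map_eq_zero {K V : Type*} [Field K] [AddCommGroup V]
    [Module K V] {u w : V} (huw : LinearIndependent K ![u, w]) (f : V →ₗ[K] K) :
    ∃ z ∈ Submodule.span K {u, w}, z ≠ 0 ∧ f z = 0 := by
  by_cases hz : f w • u - f u • w = 0
  · have hf := LinearIndependent.pair_iff.1 huw (f w) (-f u) (by rwa [neg_smul, ← sub_eq_add_neg])
    refine ⟨u, Submodule.subset_span (by simp), by simpa using huw.ne_zero 0, ?_⟩
    simpa using hf.2
  · refine ⟨f w • u - f u • w, Submodule.mem_span_pair.2 ⟨f w, -f u, ?_⟩, hz, ?_⟩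
    · rw [neg_smul, ← sub_eq_add_neg]
    · simp [mul_comm]

namespace Matrix

variable {ι : Type*} [Fintype ι]

theorem exists_neg_eigenvalue_of_det_neg [DecidableEq ι] {M : Matrix ι ι ℝ}
    (hM : M.det < 0) : ∃ (μ : ℝ) (u : ι → ℝ), 0 < μ ∧ u ≠ 0 ∧ M *ᵥ u = (-μ) • u := by
  have : Nonempty ι := by
    by_contra h
    rw [not_nonempty_iff] at h
    norm_num at hM
  set p := (-M).charpoly
  have hp : ∀ t, p.eval t = (scalar ι t + M).det := fun t => by
    rw [eval_charpoly, sub_neg_eq_add]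
  have hp0 : p.eval 0 < 0 := by simpa [hp] using hM
  have hp_tendsto : Tendsto p.eval atTop atTop :=
    p.tendsto_atTop_of_leadingCoeff_nonneg
      (by rw [charpoly_degree_eq_dim]; exact_mod_cast Fintype.card_pos)
      (by rw [(charpoly_monic _).leadingCoeff]; exact zero_le_one)
  obtain ⟨T, hpT, hT⟩ := ((hp_tendsto.eventually_gt_atTop 0).and (eventually_ge_atTop 0)).exists
  obtain ⟨t, ht, hroot⟩ := intermediate_value_Icc hT p.continuous.continuousOn ⟨hp0.le, hpT.le⟩
  have ht0 : 0 < t := lt_of_le_of_ne ht.1 (by rintro rfl; exact hp0.ne hroot)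
  obtain ⟨u, hu0, hu⟩ := exists_mulVec_eq_zero_iff.2 ((hp t).symm.trans hroot)
  refine ⟨t, u, ht0, hu0, ?_⟩
  rw [add_mulVec, add_eq_zero_iff_neg_eq] at hu
  rw [← hu]
  ext i
  simp [scalar_apply]

theorem dotProduct_mulVec_pos_of_posDef_symmPart {X : Matrix ι ι ℝ}
    (hX : ((1/2 : ℝ) • (X + Xᵀ)).PosDef) {v : ι → ℝ} (hv : v ≠ 0) : 0 < v ⬝ᵥ (X *ᵥ v) := by
  have h := hX.dotProduct_mulVec_pos hv
  rw [star_trivial, smul_mulVec, dotProduct_smul, add_mulVec, dotProduct_add, mulVec_transpose,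
    dotProduct_comm v (v ᵥ* X), ← dotProduct_mulVec, smul_eq_mul] at h
  linarith

theorem det_pos_of_dotProduct_mulVec_pos [DecidableEq ι] {X : Matrix ι ι ℝ}
    (hX : ∀ v, v ≠ 0 → 0 < v ⬝ᵥ (X *ᵥ v)) : 0 < X.det := by
  rcases lt_trichotomy 0 X.det with h | h | h
  · exact h
  · obtain ⟨v, hv0, hv⟩ := exists_mulVec_eq_zero_iff.2 h.symm
    simpa [hv] using hX v hv0
  · obtain ⟨μ, u, hμ, hu0, hu⟩ := exists_neg_eigenvalue_of_det_neg h
    have hXu := hX u hu0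
    have huu : 0 < u ⬝ᵥ u := by simpa using dotProduct_self_star_pos_iff.2 hu0
    rw [hu, dotProduct_smul, smul_eq_mul] at hXu
    nlinarith

section Signature

variable [DecidableEq ι] {P : Matrix ι ι ℝ} {μ : ι → ℝ} {i₀ : ι}

theorem det_transpose_mul_diagonal_mul_neg (hP : Pᵀ * P = 1) (hneg : μ i₀ < 0)
    (hpos : ∀ i, i ≠ i₀ → 0 < μ i) : (Pᵀ * diagonal μ * P).det < 0 := by
  have hdetP : P.det * P.det = 1 := by
    simpa [det_mul, det_transpose] using congrArg det hP
  have hdet : (Pᵀ * diagonal μ * P).det = μ i₀ * ∏ i ∈ Finset.univ.erase i₀, μ i := by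
    rw [det_mul, det_mul, det_transpose, det_diagonal,
      ← Finset.mul_prod_erase _ _ (Finset.mem_univ i₀)]
    linear_combination (μ i₀ * ∏ i ∈ Finset.univ.erase i₀, μ i) * hdetP
  rw [hdet]
  exact mul_neg_of_neg_of_pos hneg (Finset.prod_pos fun i hi => hpos i (Finset.ne_of_mem_erase hi))

theorem dotProduct_transpose_mul_diagonal_mul_mulVec_pos (hP : Pᵀ * P = 1)
    (hpos : ∀ i, i ≠ i₀ → 0 < μ i) {z : ι → ℝ} (hz : z ≠ 0) (hPz : (P *ᵥ z) i₀ = 0) :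
    0 < z ⬝ᵥ ((Pᵀ * diagonal μ * P) *ᵥ z) := by
  have hy : P *ᵥ z ≠ 0 := by
    rintro hy
    apply hz
    rw [← one_mulVec z, ← hP, ← mulVec_mulVec]
    simp [hy]
  obtain ⟨j, hj⟩ := Function.ne_iff.1 hy
  have hji : j ≠ i₀ := by rintro rfl; exact hj hPz
  rw [← mulVec_mulVec, ← mulVec_mulVec, dotProduct_mulVec, vecMul_transpose, dotProduct]
  refine Finset.sum_pos' (fun i _ => ?_) ⟨j, Finset.mem_univ j, ?_⟩
  · rw [mulVec_diagonal]
    rcases eq_or_ne i i₀ with rfl | hi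
    · simp [hPz]
    · nlinarith [hpos i hi, sq_nonneg ((P *ᵥ z) i)]
  · rw [mulVec_diagonal]
    nlinarith [hpos j hji, mul_self_pos.2 hj]

end Signature

theorem dotProduct_mulVec_mul_nonneg {X Y : Matrix ι ι ℝ} (hY : Y.IsSymm)
    (hX : ∀ v, v ≠ 0 → 0 < v ⬝ᵥ (X *ᵥ v)) (z : ι → ℝ) : 0 ≤ z ⬝ᵥ (Y *ᵥ ((X * Y) *ᵥ z)) := by
  rw [← mulVec_mulVec, dotProduct_mulVec, ← mulVec_transpose, hY.eq]
  rcases eq_or_ne (Y *ᵥ z) 0 with h | h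
  · simp [h]
  · exact (hX _ h).le

theorem dotProduct_mulVec_nonpos_of_mem_span_eigenvectors {M Y : Matrix ι ι ℝ}
    (hY : Y.IsSymm) (hMY : ∀ z, 0 ≤ z ⬝ᵥ (Y *ᵥ (M *ᵥ z)))
    {u w : ι → ℝ} {a b : ℝ} (ha : 0 < a) (hb : 0 < b)
    (hu : M *ᵥ u = (-a) • u) (hw : M *ᵥ w = (-b) • w) :
    ∀ z ∈ Submodule.span ℝ {u, w}, z ⬝ᵥ (Y *ᵥ z) ≤ 0 := by
  intro z hz
  obtain ⟨s, t, rfl⟩ := Submodule.mem_span_pair.1 hz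
  set z := s • u + t • w
  set z' := (b * s) • u + (a * t) • w
  have hzz' : z ⬝ᵥ (Y *ᵥ z') = z' ⬝ᵥ (Y *ᵥ z) := by
    rw [dotProduct_mulVec, ← mulVec_transpose, hY.eq, dotProduct_comm]
  have hMz' : M *ᵥ z' = -(a * b) • z := by
    simp only [z, z', mulVec_add, mulVec_smul, hu, hw, smul_smul]
    module
  have hsum : (a + b) • z = z' - M *ᵥ z := by
    simp only [z, z', mulVec_add, mulVec_smul, hu, hw, smul_smul]
    module
  have key : a * b * (a + b) * (z ⬝ᵥ (Y *ᵥ z))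
      = -(a * b * (z ⬝ᵥ (Y *ᵥ (M *ᵥ z))) + z' ⬝ᵥ (Y *ᵥ (M *ᵥ z'))) := by
    calc a * b * (a + b) * (z ⬝ᵥ (Y *ᵥ z))
        = a * b * (z ⬝ᵥ (Y *ᵥ ((a + b) • z))) := by
          rw [mulVec_smul, dotProduct_smul, smul_eq_mul]; ring
      _ = a * b * (z ⬝ᵥ (Y *ᵥ z') - z ⬝ᵥ (Y *ᵥ (M *ᵥ z))) := by
          rw [hsum, mulVec_sub, dotProduct_sub]
      _ = _ := by
          rw [hMz', mulVec_smul, dotProduct_smul, smul_eq_mul, hzz']; ring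
  have hnonpos : a * b * (a + b) * (z ⬝ᵥ (Y *ᵥ z)) ≤ 0 := by
    rw [key]
    nlinarith [hMY z, hMY z', mul_pos ha hb]
  exact nonpos_of_mul_nonpos_right hnonpos (by positivity)

end Matrix

theorem one_negative_eigenvalue_of_prod_general {n : ℕ}
    (X Y : Matrix (Fin n) (Fin n) ℝ)
    (hYsymm : Y.IsSymm)
    (hYspec : ∃ (P : Matrix (Fin n) (Fin n) ℝ) (μ : Fin n → ℝ) (i₀ : Fin n),
      Pᵀ * P = 1 ∧ Y = Pᵀ * Matrix.diagonal μ * P ∧ μ i₀ < 0 ∧ ∀ i, i ≠ i₀ → 0 < μ i)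
    (hX : ((1/2 : ℝ) • (X + Xᵀ)).PosDef) :
    (∃ (μ : ℝ) (u : Fin n → ℝ), 0 < μ ∧ u ≠ 0 ∧ (X * Y) *ᵥ u = (-μ) • u) ∧
    ¬ ∃ (u w : Fin n → ℝ) (a b : ℝ), LinearIndependent ℝ ![u, w] ∧ 0 < a ∧ 0 < b ∧
      (X * Y) *ᵥ u = (-a) • u ∧ (X * Y) *ᵥ w = (-b) • w := by
  obtain ⟨P, μ, i₀, hP, rfl, hneg, hpos⟩ := hYspec
  have hXpos : ∀ v, v ≠ 0 → 0 < v ⬝ᵥ (X *ᵥ v) := fun _ =>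
    dotProduct_mulVec_pos_of_posDef_symmPart hX
  refine ⟨exists_neg_eigenvalue_of_det_neg ?_, ?_⟩
  · rw [det_mul]
    exact mul_neg_of_pos_of_neg (det_pos_of_dotProduct_mulVec_pos hXpos)
      (det_transpose_mul_diagonal_mul_neg hP hneg hpos)
  · rintro ⟨u, w, a, b, huw, ha, hb, hu, hw⟩
    obtain ⟨z, hz_span, hz, hPz⟩ :=
      exists_ne_zero_mem_span_pair_map_eq_zero huw ((LinearMap.proj i₀).comp P.mulVecLin)
    exact (dotProduct_transpose_mul_diagonal_mul_mulVec_pos hP hpos hz hPz).not_ge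
      (dotProduct_mulVec_nonpos_of_mem_span_eigenvectors hYsymm
        (dotProduct_mulVec_mul_nonneg hYsymm hXpos) ha hb hu hw z hz_span)

/-- Generalization of Sylvester's law of inertia (Appendix lemma):
if `Y` is symmetric, invertible, with exactly one negative eigenvalue and `n-1`
positive eigenvalues, and the symmetric part of `X` is positive definite, then
`X * Y` has exactly one negative real eigenvalue, with a one-dimensional eigenspace. -/
theorem one_negative_eigenvalue_of_prod {n : ℕ} (hn : 1 ≤ n)
    (X Y : Matrix (Fin n) (Fin n) ℝ)
    (hYsymm : Y.IsSymm) (hYinv : IsUnit Y.det)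
    (hYspec : ∃ (P : Matrix (Fin n) (Fin n) ℝ) (μ : Fin n → ℝ) (i₀ : Fin n),
      Pᵀ * P = 1 ∧ Y = Pᵀ * Matrix.diagonal μ * P ∧ μ i₀ < 0 ∧ ∀ i, i ≠ i₀ → 0 < μ i)
    (hX : ((1/2 : ℝ) • (X + Xᵀ)).PosDef) :
    (∃ (μ : ℝ) (u : Fin n → ℝ), 0 < μ ∧ u ≠ 0 ∧ (X * Y) *ᵥ u = (-μ) • u) ∧
    ¬ ∃ (u w : Fin n → ℝ) (a b : ℝ), LinearIndependent ℝ ![u, w] ∧ 0 < a ∧ 0 < b ∧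
      (X * Y) *ᵥ u = (-a) • u ∧ (X * Y) *ᵥ w = (-b) • w :=
  one_negative_eigenvalue_of_prod_general X Y hYsymm hYspec hX
end

section
/- Let H be a real symmetric d×d matrix with exactly one negative eigenvalue and d−1 positive eigenvalues (counted with multiplicity); in particular H is invertible. Let α > 0 and let v ∈ ℝᵈ satisfy vᵀH⁻¹v = −1/α. Then: (i) the matrix H + α v vᵀ is positive semidefinite and det(H + α v vᵀ) = 0; (ii) the matrix H + 2α v vᵀ is positive definite and det(H + 2α v vᵀ) = −det H. -/
/-!
Write `Q x = xᵀ H x` and `w = H⁻¹ v`, so that `H w = v` and `Q w = vᵀ H⁻¹ v = -1/α < 0`.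
Since `H = Pᵀ diag(μ) P` has a single negative eigenvalue, `Q` is positive definite on the
hyperplane `(P x)ᵢ₀ = 0`, and hence on the `H`-orthogonal complement `{y | vᵀ y = 0}` of the
negative vector `w`. Every `x` splits as `x = y - α (vᵀ x) w` with `vᵀ y = 0`, giving
`xᵀ (H + c v vᵀ) x = Q y + (c - α) (vᵀ x)²`, which is `≥ 0` for `c = α` and `> 0` for
`c = 2α`, `x ≠ 0`. The determinants come from the matrix determinant lemma
`det (H + c v vᵀ) = det H · (1 + c vᵀ H⁻¹ v) = det H · (1 - c / α)`.
-/

open Matrix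

theorem sum_mul_sq_pos_of_apply_eq_zero {n : Type*} [Fintype n] {μ y : n → ℝ} {i₀ : n}
    (hμ : ∀ i, i ≠ i₀ → 0 < μ i) (hy : y ≠ 0) (hy₀ : y i₀ = 0) : 0 < ∑ i, μ i * y i ^ 2 := by
  obtain ⟨j, hj⟩ := Function.ne_iff.mp hy
  have hji : j ≠ i₀ := by rintro rfl; exact hj hy₀
  have hnonneg : ∀ i, 0 ≤ μ i * y i ^ 2 := fun i => by
    rcases eq_or_ne i i₀ with rfl | hi
    · simp [hy₀]
    · exact mul_nonneg (hμ i hi).le (sq_nonneg _)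
  exact Finset.sum_pos' (fun i _ => hnonneg i)
    ⟨j, Finset.mem_univ j, mul_pos (hμ j hji) (pow_two_pos_of_ne_zero hj)⟩

namespace Matrix

variable {n : Type*} [Fintype n]

theorem IsSymm.dotProduct_mulVec_comm {R : Type*} [CommSemiring R] {H : Matrix n n R}
    (hH : H.IsSymm) (x y : n → R) : x ⬝ᵥ H *ᵥ y = y ⬝ᵥ H *ᵥ x := by
  rw [dotProduct_mulVec, ← mulVec_transpose, hH.eq, dotProduct_comm]

theorem det_add_vecMulVec {R : Type*} [CommRing R] [DecidableEq n] {A : Matrix n n R}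
    (hA : IsUnit A.det) (u v : n → R) :
    (A + vecMulVec u v).det = A.det * (1 + v ⬝ᵥ A⁻¹ *ᵥ u) := by
  rw [vecMulVec_eq Unit, det_add_replicateCol_mul_replicateRow hA, ← replicateRow_vecMul]
  congr 1
  rw [det_unique, add_apply, one_apply_eq, replicateRow_mul_replicateCol_apply,
    ← dotProduct_mulVec]

theorem dotProduct_add_smul_vecMulVec_mulVec {R : Type*} [CommSemiring R] (H : Matrix n n R)
    (c : R) (v x : n → R) :
    x ⬝ᵥ (H + c • vecMulVec v v) *ᵥ x = x ⬝ᵥ H *ᵥ x + c * (v ⬝ᵥ x) ^ 2 := by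
  rw [add_mulVec, dotProduct_add, smul_mulVec, vecMulVec_mulVec, dotProduct_smul,
    dotProduct_smul, dotProduct_comm x v]
  simp [sq]

theorem dotProduct_transpose_mul_diagonal_mul_mulVec [DecidableEq n] (P : Matrix n n ℝ)
    (μ x : n → ℝ) :
    x ⬝ᵥ (Pᵀ * diagonal μ * P) *ᵥ x = ∑ i, μ i * (P *ᵥ x) i ^ 2 := by
  rw [← mulVec_mulVec, ← mulVec_mulVec, mulVec_transpose, dotProduct_comm, ← dotProduct_mulVec]
  simp only [dotProduct, mulVec_diagonal]
  exact Finset.sum_congr rfl fun i _ => by ring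

theorem dotProduct_mulVec_pos_of_mulVec_apply_eq_zero [DecidableEq n] {P : Matrix n n ℝ}
    (hP : Pᵀ * P = 1) {μ : n → ℝ} {i₀ : n} (hμ : ∀ i, i ≠ i₀ → 0 < μ i) {x : n → ℝ}
    (hx : x ≠ 0) (hx₀ : (P *ᵥ x) i₀ = 0) : 0 < x ⬝ᵥ (Pᵀ * diagonal μ * P) *ᵥ x := by
  have hPx : P *ᵥ x ≠ 0 := fun h => hx <| by
    rw [← one_mulVec x, ← hP, ← mulVec_mulVec, h, mulVec_zero]
  rw [dotProduct_transpose_mul_diagonal_mul_mulVec]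
  exact sum_mul_sq_pos_of_apply_eq_zero hμ hPx hx₀

section Saddle

variable {H : Matrix n n ℝ} {a v w : n → ℝ} {α : ℝ}

theorem dotProduct_mulVec_pos_of_orthogonal_of_neg (hH : H.IsSymm)
    (ha : ∀ x, x ≠ 0 → a ⬝ᵥ x = 0 → 0 < x ⬝ᵥ H *ᵥ x) (hw : w ⬝ᵥ H *ᵥ w < 0) {z : n → ℝ}
    (hz : z ≠ 0) (hzw : z ⬝ᵥ H *ᵥ w = 0) : 0 < z ⬝ᵥ H *ᵥ z := by
  have haw : a ⬝ᵥ w ≠ 0 := by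
    intro h
    rcases eq_or_ne w 0 with rfl | hw₀
    · simp at hw
    · exact (ha w hw₀ h).not_gt hw
  -- `z - s • w` lies in the hyperplane `a ⬝ᵥ x = 0`, and its `Q` is `Q z + s² Q w`.
  set s := a ⬝ᵥ z / a ⬝ᵥ w
  have hap : a ⬝ᵥ (z - s • w) = 0 := by
    rw [dotProduct_sub, dotProduct_smul, smul_eq_mul, div_mul_cancel₀ _ haw, sub_self]
  have hp : z - s • w ≠ 0 := by
    intro hp
    rw [sub_eq_zero.mp hp, smul_dotProduct, smul_eq_mul, mul_eq_zero] at hzw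
    rcases hzw with hs | hw'
    · exact hz (by rw [sub_eq_zero.mp hp, hs, zero_smul])
    · exact hw.ne hw'
  have hsplit : (z - s • w) ⬝ᵥ H *ᵥ (z - s • w) = z ⬝ᵥ H *ᵥ z + s ^ 2 * (w ⬝ᵥ H *ᵥ w) := by
    rw [mulVec_sub, mulVec_smul, dotProduct_sub, sub_dotProduct, sub_dotProduct,
      dotProduct_smul, smul_dotProduct, smul_dotProduct, hH.dotProduct_mulVec_comm w z, hzw]
    simp only [dotProduct_smul, smul_eq_mul]
    ring
  nlinarith [ha _ hp hap, sq_nonneg s]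

theorem dotProduct_add_smul_dotProduct_smul_eq_zero (hvw : v ⬝ᵥ w = -1 / α) (hα : α ≠ 0)
    (x : n → ℝ) : v ⬝ᵥ (x + (α * (v ⬝ᵥ x)) • w) = 0 := by
  rw [dotProduct_add, dotProduct_smul, hvw, smul_eq_mul]
  field_simp
  ring

theorem dotProduct_add_smul_vecMulVec_mulVec_eq (hH : H.IsSymm) (hw : H *ᵥ w = v)
    (hvw : v ⬝ᵥ w = -1 / α) (c : ℝ) (x : n → ℝ) :
    x ⬝ᵥ (H + c • vecMulVec v v) *ᵥ x =
      (x + (α * (v ⬝ᵥ x)) • w) ⬝ᵥ H *ᵥ (x + (α * (v ⬝ᵥ x)) • w) + (c - α) * (v ⬝ᵥ x) ^ 2 := by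
  rw [dotProduct_add_smul_vecMulVec_mulVec, mulVec_add, mulVec_smul, dotProduct_add,
    add_dotProduct, add_dotProduct, dotProduct_smul, smul_dotProduct, smul_dotProduct,
    dotProduct_smul, hH.dotProduct_mulVec_comm w x, hw, dotProduct_comm x v,
    dotProduct_comm w v, hvw]
  simp only [smul_eq_mul]
  field_simp
  ring

theorem dotProduct_mulVec_pos_of_dotProduct_eq_zero (hH : H.IsSymm)
    (ha : ∀ x, x ≠ 0 → a ⬝ᵥ x = 0 → 0 < x ⬝ᵥ H *ᵥ x) (hw : H *ᵥ w = v)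
    (hvw : v ⬝ᵥ w = -1 / α) (hα : 0 < α) {y : n → ℝ} (hy : y ≠ 0) (hvy : v ⬝ᵥ y = 0) :
    0 < y ⬝ᵥ H *ᵥ y := by
  have hneg : w ⬝ᵥ H *ᵥ w < 0 := by
    rw [hw, dotProduct_comm, hvw, neg_div]
    exact neg_neg_of_pos (one_div_pos.mpr hα)
  refine dotProduct_mulVec_pos_of_orthogonal_of_neg hH ha hneg hy ?_
  rw [hw, dotProduct_comm, hvy]

theorem posSemidef_add_smul_vecMulVec (hH : H.IsSymm)
    (ha : ∀ x, x ≠ 0 → a ⬝ᵥ x = 0 → 0 < x ⬝ᵥ H *ᵥ x) (hw : H *ᵥ w = v)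
    (hvw : v ⬝ᵥ w = -1 / α) (hα : 0 < α) {c : ℝ} (hc : α ≤ c) :
    (H + c • vecMulVec v v).PosSemidef := by
  refine .of_dotProduct_mulVec_nonneg ?_ fun x => ?_
  · exact isHermitian_iff_isSymm.mpr (hH.add (IsSymm.smul (transpose_vecMulVec v v) c))
  rw [star_trivial, dotProduct_add_smul_vecMulVec_mulVec_eq hH hw hvw c x]
  set y := x + (α * (v ⬝ᵥ x)) • w
  have hy : 0 ≤ y ⬝ᵥ H *ᵥ y := by
    rcases eq_or_ne y 0 with hy | hy
    · simp [hy]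
    · exact (dotProduct_mulVec_pos_of_dotProduct_eq_zero hH ha hw hvw hα hy
        (dotProduct_add_smul_dotProduct_smul_eq_zero hvw hα.ne' x)).le
  have := mul_nonneg (sub_nonneg.mpr hc) (sq_nonneg (v ⬝ᵥ x))
  linarith

theorem posDef_add_smul_vecMulVec (hH : H.IsSymm)
    (ha : ∀ x, x ≠ 0 → a ⬝ᵥ x = 0 → 0 < x ⬝ᵥ H *ᵥ x) (hw : H *ᵥ w = v)
    (hvw : v ⬝ᵥ w = -1 / α) (hα : 0 < α) {c : ℝ} (hc : α < c) :
    (H + c • vecMulVec v v).PosDef := by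
  have hpsd := posSemidef_add_smul_vecMulVec hH ha hw hvw hα le_rfl
  refine .of_dotProduct_mulVec_pos
    (posSemidef_add_smul_vecMulVec hH ha hw hvw hα hc.le).isHermitian fun x hx => ?_
  have hsplit : x ⬝ᵥ (H + c • vecMulVec v v) *ᵥ x =
      x ⬝ᵥ (H + α • vecMulVec v v) *ᵥ x + (c - α) * (v ⬝ᵥ x) ^ 2 := by
    rw [dotProduct_add_smul_vecMulVec_mulVec, dotProduct_add_smul_vecMulVec_mulVec]
    ring
  rw [star_trivial, hsplit]
  rcases eq_or_ne (v ⬝ᵥ x) 0 with hvx | hvx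
  · rw [dotProduct_add_smul_vecMulVec_mulVec, hvx]
    simpa using dotProduct_mulVec_pos_of_dotProduct_eq_zero hH ha hw hvw hα hx hvx
  · have hnonneg : 0 ≤ x ⬝ᵥ (H + α • vecMulVec v v) *ᵥ x := by
      simpa using hpsd.dotProduct_mulVec_nonneg x
    have := mul_pos (sub_pos.mpr hc) (pow_two_pos_of_ne_zero hvx)
    linarith

end Saddle

end Matrix

/-- Paper's Lemma 3.1: for a symmetric matrix `H` with exactly one negative
eigenvalue and `d-1` positive eigenvalues, `α > 0` and `v` with `vᵀH⁻¹v = -1/α`,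
the matrix `H + α v vᵀ` is positive semidefinite with vanishing determinant, and
`H + 2α v vᵀ` is positive definite with determinant `-det H`. -/
theorem rank_one_update_of_saddle_hessian {d : ℕ} (H : Matrix (Fin d) (Fin d) ℝ)
    (hHsymm : H.IsSymm)
    (hspec : ∃ (P : Matrix (Fin d) (Fin d) ℝ) (μ : Fin d → ℝ) (i₀ : Fin d),
      Pᵀ * P = 1 ∧ H = Pᵀ * Matrix.diagonal μ * P ∧ μ i₀ < 0 ∧ ∀ i, i ≠ i₀ → 0 < μ i)
    (α : ℝ) (hα : 0 < α) (v : Fin d → ℝ)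
    (hv : v ⬝ᵥ (H⁻¹ *ᵥ v) = -1/α) :
    (H + α • vecMulVec v v).PosSemidef ∧ (H + α • vecMulVec v v).det = 0 ∧
    (H + (2*α) • vecMulVec v v).PosDef ∧ (H + (2*α) • vecMulVec v v).det = - H.det := by
  obtain ⟨P, μ, i₀, hP, hH, -, hμ⟩ := hspec
  have ha : ∀ x, x ≠ 0 → P i₀ ⬝ᵥ x = 0 → 0 < x ⬝ᵥ H *ᵥ x := fun x hx hx₀ =>
    hH ▸ dotProduct_mulVec_pos_of_mulVec_apply_eq_zero hP hμ hx hx₀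
  -- A singular `H` would have the junk inverse `H⁻¹ = 0`, contradicting `hv`.
  have hdet : IsUnit H.det := by
    by_contra h
    rw [nonsing_inv_apply_not_isUnit H h, zero_mulVec, dotProduct_zero] at hv
    have : 0 < 1 / α := one_div_pos.mpr hα
    linarith [neg_div α 1]
  have hw : H *ᵥ (H⁻¹ *ᵥ v) = v := by rw [mulVec_mulVec, mul_nonsing_inv H hdet, one_mulVec]
  refine ⟨posSemidef_add_smul_vecMulVec hHsymm ha hw hv hα le_rfl, ?_,
    posDef_add_smul_vecMulVec hHsymm ha hw hv hα (by linarith), ?_⟩ <;>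
  · rw [← smul_vecMulVec, det_add_vecMulVec hdet, mulVec_smul, dotProduct_smul, hv, smul_eq_mul]
    field_simp
    ring
end

section
/- Let H be a real symmetric d×d matrix with exactly one negative eigenvalue −λ₁ (the remaining d−1 eigenvalues being positive), and let u₁ be an eigenvector of H for −λ₁. If v ∈ ℝᵈ satisfies vᵀH⁻¹v < 0, then v·u₁ ≠ 0. In particular, if A is a real d×d matrix whose symmetric part (A + Aᵀ)/2 is positive definite, and v ≠ 0 satisfies H Aᵀ v = −μ v for some μ > 0, then v is not orthogonal to u₁. -/
/-!
Diagonalize `H = Pᵀ D P` with `P` orthogonal. The negative eigenvalue is simple, so `P u₁` is a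
multiple of the basis vector `e_{i₀}`, and `v ⬝ u₁ = (P v)_{i₀} (P u₁)_{i₀}`. If `v ⬝ u₁ = 0`, then
`vᵀ H⁻¹ v = (P v)ᵀ D⁻¹ (P v)` only involves the positive entries of `D⁻¹`, hence is `≥ 0`.
For the second part, `H Aᵀ v = -μ v` gives `vᵀ Aᵀ v = -μ vᵀ H⁻¹ v`, and the left side is positive.
-/

open Matrix

namespace Matrix

variable {n : Type*} [Fintype n]

lemma dotProduct_transpose_mul_mul_mulVec {R : Type*} [CommRing R] (P M : Matrix n n R)
    (v : n → R) : v ⬝ᵥ ((Pᵀ * M * P) *ᵥ v) = (P *ᵥ v) ⬝ᵥ (M *ᵥ (P *ᵥ v)) := by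
  rw [← mulVec_mulVec, ← mulVec_mulVec, dotProduct_transpose_mulVec, dotProduct_comm]

lemma dotProduct_transpose_mulVec_pos_of_posDef {A : Matrix n n ℝ}
    (hA : ((1 / 2 : ℝ) • (A + Aᵀ)).PosDef) {v : n → ℝ} (hv : v ≠ 0) :
    0 < v ⬝ᵥ (Aᵀ *ᵥ v) := by
  have := hA.dotProduct_mulVec_pos hv
  rw [star_trivial, smul_mulVec, add_mulVec, dotProduct_smul, dotProduct_add,
    ← dotProduct_transpose_mulVec A v v, smul_eq_mul] at this
  linarith

variable [DecidableEq n]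

lemma mulVec_transpose_mul_mul_mulVec {R : Type*} [CommRing R] {P : Matrix n n R}
    (hP : P * Pᵀ = 1) (M : Matrix n n R) (u : n → R) :
    P *ᵥ ((Pᵀ * M * P) *ᵥ u) = M *ᵥ (P *ᵥ u) := by
  rw [mulVec_mulVec, ← Matrix.mul_assoc, ← Matrix.mul_assoc, hP, Matrix.one_mul, mulVec_mulVec]

lemma dotProduct_diagonal_mulVec_nonneg {R : Type*} [CommRing R] [LinearOrder R]
    [IsStrictOrderedRing R] {c : n → R} {i₀ : n} (hc : ∀ i ≠ i₀, 0 ≤ c i) {w : n → R}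
    (hw : w i₀ = 0) : 0 ≤ w ⬝ᵥ (diagonal c *ᵥ w) := by
  refine Finset.sum_nonneg fun i _ => ?_
  rw [mulVec_diagonal]
  rcases eq_or_ne i i₀ with rfl | hi
  · simp [hw]
  · nlinarith [hc i hi, mul_self_nonneg (w i)]

variable {K : Type*} [Field K]

lemma eq_single_of_diagonal_mulVec_eq_smul {μ : n → K} {i₀ : n} (hsimple : ∀ i ≠ i₀, μ i ≠ μ i₀)
    {w : n → K} (hw : diagonal μ *ᵥ w = μ i₀ • w) : w = Pi.single i₀ (w i₀) := by
  ext i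
  rcases eq_or_ne i i₀ with rfl | hi
  · simp
  · have hwi : (μ i - μ i₀) * w i = 0 := by
      have := congrFun hw i
      rw [mulVec_diagonal, Pi.smul_apply, smul_eq_mul] at this
      rw [sub_mul, this, sub_self]
    rw [(mul_eq_zero.mp hwi).resolve_left (sub_ne_zero.mpr (hsimple i hi)),
      Pi.single_eq_of_ne hi]

lemma conj_diagonal_inv_mul_conj_diagonal {P : Matrix n n K} (hP : Pᵀ * P = 1) {μ : n → K}
    (hμ : ∀ i, μ i ≠ 0) : (Pᵀ * diagonal μ⁻¹ * P) * (Pᵀ * diagonal μ * P) = 1 := by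
  have hdiag : diagonal μ⁻¹ * diagonal μ = 1 := by
    rw [diagonal_mul_diagonal, ← diagonal_one]
    exact congrArg diagonal (funext fun i => inv_mul_cancel₀ (hμ i))
  calc (Pᵀ * diagonal μ⁻¹ * P) * (Pᵀ * diagonal μ * P)
      = Pᵀ * (diagonal μ⁻¹ * (P * Pᵀ) * diagonal μ) * P := by simp only [Matrix.mul_assoc]
    _ = 1 := by rw [mul_eq_one_comm.mp hP, Matrix.mul_one, hdiag, Matrix.mul_one, hP]

lemma dotProduct_inv_mulVec_neg [LinearOrder K] [IsStrictOrderedRing K] {H B : Matrix n n K}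
    (hH : IsUnit H.det) {μ : K} (hμ : 0 < μ) {v : n → K} (hB : 0 < v ⬝ᵥ (B *ᵥ v))
    (hv : (H * B) *ᵥ v = (-μ) • v) : v ⬝ᵥ (H⁻¹ *ᵥ v) < 0 := by
  have hBv : B *ᵥ v = (-μ) • (H⁻¹ *ᵥ v) := by
    rw [← mulVec_smul, ← hv, mulVec_mulVec, ← Matrix.mul_assoc, nonsing_inv_mul _ hH,
      Matrix.one_mul]
  rw [hBv, dotProduct_smul, smul_eq_mul] at hB
  nlinarith

end Matrix

theorem eigenvector_not_orthogonal_to_unstable_direction_general {d : ℕ}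
    (H : Matrix (Fin d) (Fin d) ℝ)
    (lam1 : ℝ) (hlam1 : 0 < lam1) (u1 : Fin d → ℝ) (hu1 : u1 ≠ 0)
    (heig1 : H *ᵥ u1 = (-lam1) • u1)
    (hspec : ∃ (P : Matrix (Fin d) (Fin d) ℝ) (μ : Fin d → ℝ) (i₀ : Fin d),
      Pᵀ * P = 1 ∧ H = Pᵀ * Matrix.diagonal μ * P ∧ μ i₀ = -lam1 ∧ ∀ i, i ≠ i₀ → 0 < μ i) :
    (∀ v : Fin d → ℝ, v ⬝ᵥ (H⁻¹ *ᵥ v) < 0 → v ⬝ᵥ u1 ≠ 0) ∧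
    (∀ (A : Matrix (Fin d) (Fin d) ℝ) (μ : ℝ) (v : Fin d → ℝ),
      ((1/2 : ℝ) • (A + Aᵀ)).PosDef → 0 < μ → v ≠ 0 →
      (H * Aᵀ) *ᵥ v = (-μ) • v → v ⬝ᵥ u1 ≠ 0) := by
  obtain ⟨P, μ, i₀, hP, hH, hμi₀, hμpos⟩ := hspec
  have hμ : ∀ i, μ i ≠ 0 := fun i => by
    rcases eq_or_ne i i₀ with rfl | hi
    · linarith
    · exact (hμpos i hi).ne'
  have hleft : Pᵀ * diagonal μ⁻¹ * P * H = 1 := hH ▸ conj_diagonal_inv_mul_conj_diagonal hP hμ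
  have hw1 : P *ᵥ u1 = Pi.single i₀ ((P *ᵥ u1) i₀) := by
    refine eq_single_of_diagonal_mulVec_eq_smul (μ := μ) (fun i hi => by linarith [hμpos i hi]) ?_
    rw [← mulVec_transpose_mul_mul_mulVec (mul_eq_one_comm.mp hP), ← hH, heig1, hμi₀, mulVec_smul]
  have hw1i₀ : (P *ᵥ u1) i₀ ≠ 0 := fun h => hu1 <| by
    rw [← one_mulVec u1, ← hP, ← mulVec_mulVec, hw1, h, Pi.single_zero, mulVec_zero]
  have part1 : ∀ v, v ⬝ᵥ (H⁻¹ *ᵥ v) < 0 → v ⬝ᵥ u1 ≠ 0 := by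
    intro v hneg horth
    have hwi₀ : (P *ᵥ v) i₀ = 0 := by
      rw [← one_mulVec u1, ← hP, ← mulVec_mulVec, dotProduct_transpose_mulVec, dotProduct_comm,
        hw1, dotProduct_single] at horth
      exact (mul_eq_zero.mp horth).resolve_right hw1i₀
    refine hneg.not_ge ?_
    rw [inv_eq_left_inv hleft, dotProduct_transpose_mul_mul_mulVec]
    exact dotProduct_diagonal_mulVec_nonneg (fun i hi => (inv_pos.mpr (hμpos i hi)).le) hwi₀
  refine ⟨part1, fun A μ' v hA hμ' hv heig => part1 v ?_⟩
  exact dotProduct_inv_mulVec_neg (isUnit_det_of_left_inverse hleft) hμ'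
    (dotProduct_transpose_mulVec_pos_of_posDef hA hv) heig

/-- Section 3.1 of the paper: if `H` is symmetric with unique negative eigenvalue
`-λ₁` (eigenvector `u₁`, other eigenvalues positive) and `vᵀH⁻¹v < 0`, then
`v · u₁ ≠ 0`.  In particular the eigenvector `v` of `H Aᵀ` for a negative
eigenvalue `-μ` is not orthogonal to `u₁`, when the symmetric part of `A` is
positive definite. -/
theorem eigenvector_not_orthogonal_to_unstable_direction {d : ℕ}
    (H : Matrix (Fin d) (Fin d) ℝ) (hHsymm : H.IsSymm)
    (lam1 : ℝ) (hlam1 : 0 < lam1) (u1 : Fin d → ℝ) (hu1 : u1 ≠ 0)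
    (heig1 : H *ᵥ u1 = (-lam1) • u1)
    (hspec : ∃ (P : Matrix (Fin d) (Fin d) ℝ) (μ : Fin d → ℝ) (i₀ : Fin d),
      Pᵀ * P = 1 ∧ H = Pᵀ * Matrix.diagonal μ * P ∧ μ i₀ = -lam1 ∧ ∀ i, i ≠ i₀ → 0 < μ i) :
    (∀ v : Fin d → ℝ, v ⬝ᵥ (H⁻¹ *ᵥ v) < 0 → v ⬝ᵥ u1 ≠ 0) ∧
    (∀ (A : Matrix (Fin d) (Fin d) ℝ) (μ : ℝ) (v : Fin d → ℝ),
      ((1/2 : ℝ) • (A + Aᵀ)).PosDef → 0 < μ → v ≠ 0 →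
      (H * Aᵀ) *ᵥ v = (-μ) • v → v ⬝ᵥ u1 ≠ 0) :=
  eigenvector_not_orthogonal_to_unstable_direction_general H lam1 hlam1 u1 hu1 heig1 hspec
end

section
/- Let L ≥ 2 and let z₀, z₁, …, z_L be vectors in ℝᵈ with z_L = z₀ (a closed cycle). Set A = ∑_{i=0}^{L−1} (zᵢ − zᵢ₊₁) zᵢᵀ. Then A + Aᵀ = ∑_{i=0}^{L−1} (zᵢ − zᵢ₊₁)(zᵢ − zᵢ₊₁)ᵀ. Consequently, if the increments {zᵢ₊₁ − zᵢ : 0 ≤ i < L} span ℝᵈ, then A + Aᵀ is positive definite (equivalently, the symmetric part of A is positive definite). -/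
/-!
Around the cycle, `(zᵢ - zᵢ₊₁) zᵢᵀ + zᵢ (zᵢ - zᵢ₊₁)ᵀ = (zᵢ - zᵢ₊₁)(zᵢ - zᵢ₊₁)ᵀ + zᵢ zᵢᵀ - zᵢ₊₁ zᵢ₊₁ᵀ`,
and the last two terms telescope away because `z_L = z₀`. The quadratic form of the remaining
sum is `∑ ⟨zᵢ - zᵢ₊₁, x⟩²`, which vanishes only if `x` is orthogonal to every increment, hence
to their span, hence `x = 0` when the increments span.
-/

open Matrix

namespace Matrix

variable {n R : Type*}

theorem vecMulVec_sub_add_transpose [CommRing R] (a b : n → R) :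
    vecMulVec (a - b) a + (vecMulVec (a - b) a)ᵀ
      = vecMulVec (a - b) (a - b) + (vecMulVec a a - vecMulVec b b) := by
  rw [transpose_vecMulVec]
  simp only [sub_vecMulVec, vecMulVec_sub]
  abel

theorem sum_range_vecMulVec_add_transpose_of_cycle [CommRing R] (L : ℕ) (z : ℕ → n → R)
    (hz : z L = z 0) :
    (∑ i ∈ Finset.range L, vecMulVec (z i - z (i + 1)) (z i))
        + (∑ i ∈ Finset.range L, vecMulVec (z i - z (i + 1)) (z i))ᵀ
      = ∑ i ∈ Finset.range L, vecMulVec (z i - z (i + 1)) (z i - z (i + 1)) := by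
  rw [transpose_sum, ← Finset.sum_add_distrib]
  simp only [vecMulVec_sub_add_transpose]
  rw [Finset.sum_add_distrib, Finset.sum_range_sub' (fun i => vecMulVec (z i) (z i)), hz,
    sub_self, add_zero]

variable [Fintype n]

theorem eq_zero_of_dotProduct_eq_zero_of_span_eq_top [CommRing R] {S : Set (n → R)}
    (hS : Submodule.span R S = ⊤) {x : n → R} (hx : ∀ w ∈ S, x ⬝ᵥ w = 0) : x = 0 :=
  dotProduct_eq_zero x fun w =>
    LinearMap.congr_fun (LinearMap.ext_on (f := dotProductBilin R R x) (g := 0) hS hx) w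

theorem dotProduct_vecMulVec_self_mulVec [CommRing R] (w x : n → R) :
    x ⬝ᵥ (vecMulVec w w *ᵥ x) = (w ⬝ᵥ x) ^ 2 := by
  rw [vecMulVec_mulVec, op_smul_eq_smul, dotProduct_smul, smul_eq_mul, dotProduct_comm, sq]

theorem posDef_sum_vecMulVec_self [CommRing R] [LinearOrder R] [IsStrictOrderedRing R]
    [StarRing R] [TrivialStar R] {ι : Type*} (s : Finset ι) (w : ι → n → R)
    (hw : Submodule.span R (w '' s) = ⊤) : (∑ i ∈ s, vecMulVec (w i) (w i)).PosDef := by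
  refine .of_dotProduct_mulVec_pos ?_ fun x hx => ?_
  · simp only [IsHermitian, conjTranspose_sum, conjTranspose_vecMulVec, star_trivial]
  · simp only [star_trivial, sum_mulVec, dotProduct_sum, dotProduct_vecMulVec_self_mulVec]
    obtain ⟨i, hi, hwx⟩ : ∃ i ∈ s, w i ⬝ᵥ x ≠ 0 := by
      by_contra! h
      exact hx (eq_zero_of_dotProduct_eq_zero_of_span_eq_top hw
        (by simpa [dotProduct_comm] using h))
    exact Finset.sum_pos' (fun i _ => sq_nonneg _) ⟨i, hi, by positivity⟩

end Matrix

theorem cycle_matrix_symmetric_part_general {d : ℕ} (L : ℕ)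
    (z : ℕ → Fin d → ℝ) (hz : z L = z 0)
    (A : Matrix (Fin d) (Fin d) ℝ)
    (hA : A = ∑ i ∈ Finset.range L, vecMulVec (z i - z (i+1)) (z i)) :
    A + Aᵀ = ∑ i ∈ Finset.range L, vecMulVec (z i - z (i+1)) (z i - z (i+1)) ∧
    (Submodule.span ℝ {w : Fin d → ℝ | ∃ i, i < L ∧ w = z (i+1) - z i} = ⊤ →
      (A + Aᵀ).PosDef) := by
  have hsym := hA ▸ sum_range_vecMulVec_add_transpose_of_cycle L z hz
  refine ⟨hsym, fun hspan => ?_⟩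
  have hincr : {w : Fin d → ℝ | ∃ i, i < L ∧ w = z (i+1) - z i}
      = (fun i => z (i+1) - z i) '' ↑(Finset.range L) := by
    ext w
    simp [eq_comm]
  have hpos := posDef_sum_vecMulVec_self (Finset.range L) _ (hincr ▸ hspan)
  rw [hsym]
  simpa only [← neg_sub (z (_ + 1)) (z _), neg_vecMulVec, vecMulVec_neg, neg_neg] using hpos

/-- Section 3.1 of the paper: for a closed cycle `z₀, …, z_L = z₀` in `ℝᵈ` and
`A = ∑ (zᵢ - zᵢ₊₁) zᵢᵀ`, one has `A + Aᵀ = ∑ (zᵢ - zᵢ₊₁)(zᵢ - zᵢ₊₁)ᵀ`; hence if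
the increments span `ℝᵈ`, the symmetric part of `A` is positive definite. -/
theorem cycle_matrix_symmetric_part {d : ℕ} (L : ℕ) (hL : 2 ≤ L)
    (z : ℕ → Fin d → ℝ) (hz : z L = z 0)
    (A : Matrix (Fin d) (Fin d) ℝ)
    (hA : A = ∑ i ∈ Finset.range L, vecMulVec (z i - z (i+1)) (z i)) :
    A + Aᵀ = ∑ i ∈ Finset.range L, vecMulVec (z i - z (i+1)) (z i - z (i+1)) ∧
    (Submodule.span ℝ {w : Fin d → ℝ | ∃ i, i < L ∧ w = z (i+1) - z i} = ⊤ →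
      (A + Aᵀ).PosDef) :=
  cycle_matrix_symmetric_part_general L z hz A hA
end

section
/- Fix an integer L ≥ 1 and functions f, g : ℤ/Lℤ → ℝ. Then (∑_{i ∈ ℤ/Lℤ} f(i)(g(i+1) − g(i)))² ≤ L² (∑_{i ∈ ℤ/Lℤ} (f(i+1) − f(i))²)(∑_{i ∈ ℤ/Lℤ} (g(i+1) − g(i))²). -/
/-!
Write `𝓓(f) = ∑ᵢ (f(i+1) - f(i))²`. Since `∑ᵢ (g(i+1) - g(i)) = 0`, the constant `f(0)` may be
subtracted from `f` without changing the left-hand side, and Cauchy–Schwarz bounds its square by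
`(∑ᵢ (f(i) - f(0))²) 𝓓(g)`. Telescoping along the path `0 → 1 → ⋯ → i` of length `< L` and
Cauchy–Schwarz again give the Poincaré inequality `(f(i) - f(0))² ≤ L 𝓓(f)`, whence
`∑ᵢ (f(i) - f(0))² ≤ L² 𝓓(f)`.
-/

open Finset

section

variable {G : Type*} [AddGroup G] [Fintype G]

theorem sum_comp_add_right_sub_eq_zero {M : Type*} [AddCommGroup M] (a : G) (g : G → M) :
    ∑ i, (g (i + a) - g i) = 0 := by
  rw [sum_sub_distrib, sub_eq_zero]
  exact Fintype.sum_equiv (Equiv.addRight a) _ g fun _ => rfl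

theorem sum_mul_comp_add_right_sub_eq_sum_sub_mul {R : Type*} [CommRing R] (a : G) (c : R)
    (f g : G → R) :
    ∑ i, f i * (g (i + a) - g i) = ∑ i, (f i - c) * (g (i + a) - g i) := by
  simp_rw [sub_mul (f _)]
  rw [sum_sub_distrib, ← mul_sum, sum_comp_add_right_sub_eq_zero, mul_zero, sub_zero]

end

namespace ZMod

variable {L : ℕ} [NeZero L]

def cycleDirichletForm (g : ZMod L → ℝ) : ℝ :=
  ∑ i, (g (i + 1) - g i) ^ 2

theorem sq_sub_apply_zero_le_mul_cycleDirichletForm (g : ZMod L → ℝ) (i : ZMod L) :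
    (g i - g 0) ^ 2 ≤ L * cycleDirichletForm g := by
  have htelescope : g i - g 0 = ∑ k ∈ range i.val, (g ((k : ZMod L) + 1) - g k) := by
    simpa only [Nat.cast_succ, natCast_zmod_val, Nat.cast_zero] using
      (sum_range_sub (fun k : ℕ => g k) i.val).symm
  have hinj : Set.InjOn (Nat.cast : ℕ → ZMod L) (range i.val) := fun a ha b hb hab => by
    have hL {k} (hk : k ∈ (range i.val : Set ℕ)) : k < L := (mem_range.1 hk).trans (val_lt i)
    simpa only [val_cast_of_lt (hL ha), val_cast_of_lt (hL hb)] using congrArg val hab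
  calc (g i - g 0) ^ 2 = (∑ k ∈ range i.val, (g ((k : ZMod L) + 1) - g k)) ^ 2 := by
        rw [htelescope]
    _ ≤ #(range i.val) * ∑ k ∈ range i.val, (g ((k : ZMod L) + 1) - g k) ^ 2 :=
        sq_sum_le_card_mul_sum_sq
    _ = i.val * ∑ j ∈ (range i.val).image Nat.cast, (g (j + 1) - g j) ^ 2 := by
        rw [card_range, sum_image hinj]
    _ ≤ L * cycleDirichletForm g :=
        mul_le_mul (mod_cast (val_lt i).le)
          (sum_le_sum_of_subset_of_nonneg (subset_univ _) fun _ _ _ => sq_nonneg _)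
          (sum_nonneg fun _ _ => sq_nonneg _) L.cast_nonneg

theorem sum_sq_sub_apply_zero_le_sq_mul_cycleDirichletForm (g : ZMod L → ℝ) :
    ∑ i, (g i - g 0) ^ 2 ≤ (L : ℝ) ^ 2 * cycleDirichletForm g := by
  calc ∑ i, (g i - g 0) ^ 2 ≤ ∑ _i : ZMod L, L * cycleDirichletForm g :=
        sum_le_sum fun i _ => sq_sub_apply_zero_le_mul_cycleDirichletForm g i
    _ = (L : ℝ) ^ 2 * cycleDirichletForm g := by
        rw [sum_const, card_univ, card, nsmul_eq_mul, ← mul_assoc, sq]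

end ZMod

theorem cyclic_sector_condition_general (L : ℕ) [NeZero L] (f g : ZMod L → ℝ) :
    (∑ i : ZMod L, f i * (g (i+1) - g i)) ^ 2 ≤
      (L : ℝ) ^ 2 * (∑ i : ZMod L, (f (i+1) - f i) ^ 2) *
        (∑ i : ZMod L, (g (i+1) - g i) ^ 2) :=
  calc (∑ i, f i * (g (i + 1) - g i)) ^ 2 = (∑ i, (f i - f 0) * (g (i + 1) - g i)) ^ 2 := by
        rw [sum_mul_comp_add_right_sub_eq_sum_sub_mul 1 (f 0)]
    _ ≤ (∑ i, (f i - f 0) ^ 2) * ZMod.cycleDirichletForm g := sum_mul_sq_le_sq_mul_sq _ _ _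
    _ ≤ (L : ℝ) ^ 2 * ZMod.cycleDirichletForm f * ZMod.cycleDirichletForm g :=
        mul_le_mul_of_nonneg_right (ZMod.sum_sq_sub_apply_zero_le_sq_mul_cycleDirichletForm f)
          (sum_nonneg fun _ _ => sq_nonneg _)

/-- Sector condition on a cycle (paper's Lemma 2.1, per-cycle form):
`(∑ f(i)(g(i+1) - g(i)))² ≤ L² (∑ (f(i+1)-f(i))²)(∑ (g(i+1)-g(i))²)`
over the cyclic group `ℤ/Lℤ`. -/
theorem cyclic_sector_condition (L : ℕ) [NeZero L] (hL : 1 ≤ L) (f g : ZMod L → ℝ) :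
    (∑ i : ZMod L, f i * (g (i+1) - g i)) ^ 2 ≤
      (L : ℝ) ^ 2 * (∑ i : ZMod L, (f (i+1) - f i) ^ 2) *
        (∑ i : ZMod L, (g (i+1) - g i) ^ 2) :=
  cyclic_sector_condition_general L f g
end

section
/- Let H be a real symmetric d×d matrix with orthonormal eigenvectors u₁, …, u_d and eigenvalues −λ₁, λ₂, …, λ_d, where λ₁, …, λ_d > 0. Let α > 0 and v ∈ ℝᵈ with coordinates v_k = v·u_k satisfying v₁ > 0 and v₁²/λ₁ = ∑_{k=2}^d v_k²/λ_k + 1/α. Let (ε_N)_{N≥1} be positive reals with N ε_N² → ∞ and N ε_N³ → 0, and let Φ(t) = ∫_{−∞}^t (2π)^{−1/2} e^{−y²/2} dy be the standard normal distribution function. Then for every r > 0 there exist constants c₀ > 0, C₀ < ∞ and N₀ such that for all N ≥ N₀: (i) every x ∈ ℝᵈ with |x·u₁ − ε_N| ≤ r/N satisfies exp(−(N/2) xᵀHx) · (1 − Φ(√(αN)(x·v)))² ≤ C₀ e^{−c₀ N ε_N²}; and (ii) every x ∈ ℝᵈ with |x·u₁ + ε_N| ≤ r/N satisfies exp(−(N/2)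 xᵀHx) · Φ(√(αN)(x·v))² ≤ C₀ e^{−c₀ N ε_N²}. -/
/-!
In the eigenbasis write `y = x·u₁`, `Q = ∑_{k≥2} λ_k (x·u_k)²` and `s = ∑_{k≥2} v_k (x·u_k)`,
so that `xᵀHx = -λ₁y² + Q`, `x·v = v₁y + s`, and `s² ≤ βQ` with `β = ∑_{k≥2} v_k²/λ_k` by
Cauchy–Schwarz. The Chernoff bound gives `(1 - Φ(t))² ≤ exp(-max(t, 0)²)`, so the weighted
quantity is at most `exp((N/2)(λ₁y² - Q - 2α max(v₁y + s, 0)²))`. Minimising over `Q` and `s`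
subject to `s² ≤ βQ`, and using `α v₁² = λ₁(αβ + 1)`, bounds the exponent by
`-Nλ₁y²/(2(2αβ + 1))`. On the boundary piece `y ≥ ε_N/2` for large `N`, since
`r/N = o(ε_N)`. The estimate near `-ε_N` is the one near `ε_N` applied to `-x`, because
`Φ(-t) = 1 - Φ(t)`.
-/

open Matrix Filter MeasureTheory

/-- The standard normal distribution function `Φ(t) = ∫_{-∞}^t (2π)^{-1/2} e^{-y²/2} dy`. -/
noncomputable def stdGaussianCDF (t : ℝ) : ℝ :=
  ∫ y in Set.Iic t, (2 * Real.pi) ^ (-(1 : ℝ) / 2) * Real.exp (-y ^ 2 / 2)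

open ProbabilityTheory Real

theorem stdGaussianCDF_eq_measureReal (t : ℝ) :
    stdGaussianCDF t = (gaussianReal 0 1).real (Set.Iic t) := by
  rw [measureReal_def, gaussianReal_apply_eq_integral _ one_ne_zero,
    ENNReal.toReal_ofReal (setIntegral_nonneg measurableSet_Iic
      fun y _ => gaussianPDFReal_nonneg _ _ _), stdGaussianCDF]
  congr 1 with y
  rw [gaussianPDFReal, sqrt_eq_rpow, ← rpow_neg (by positivity)]
  norm_num

theorem one_sub_stdGaussianCDF (t : ℝ) :
    1 - stdGaussianCDF t = (gaussianReal 0 1).real (Set.Ioi t) := by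
  rw [stdGaussianCDF_eq_measureReal, ← probReal_compl_eq_one_sub measurableSet_Iic,
    Set.compl_Iic]

theorem stdGaussianCDF_neg (t : ℝ) : stdGaussianCDF (-t) = 1 - stdGaussianCDF t := by
  have := nullSingletonClass_gaussianReal (μ := 0) (one_ne_zero (α := NNReal))
  have hsymm : (gaussianReal 0 1).map (fun x => -x) = gaussianReal 0 1 := by
    simpa using gaussianReal_map_neg (μ := 0) (v := 1)
  rw [one_sub_stdGaussianCDF, stdGaussianCDF_eq_measureReal, measureReal_congr Ioi_ae_eq_Ici]
  conv_lhs => rw [← hsymm, map_measureReal_apply measurable_neg measurableSet_Iic]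
  simp

theorem one_sub_stdGaussianCDF_le_exp {t : ℝ} (ht : 0 ≤ t) :
    1 - stdGaussianCDF t ≤ exp (-t ^ 2 / 2) := by
  have chernoff := measure_ge_le_exp_mul_mgf (X := id) (μ := gaussianReal 0 1) t ht
    (integrable_exp_mul_gaussianReal t)
  rw [mgf_id_gaussianReal, ← exp_add] at chernoff
  rw [one_sub_stdGaussianCDF]
  calc (gaussianReal 0 1).real (Set.Ioi t)
      ≤ (gaussianReal 0 1).real {ω | t ≤ id ω} := measureReal_mono fun ω (hω : t < ω) => hω.le
    _ ≤ exp (-t ^ 2 / 2) := chernoff.trans_eq (by congr 1; push_cast; ring)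

theorem one_sub_stdGaussianCDF_sq_le (t : ℝ) :
    (1 - stdGaussianCDF t) ^ 2 ≤ exp (-max t 0 ^ 2) := by
  have h0 : 0 ≤ 1 - stdGaussianCDF t := one_sub_stdGaussianCDF t ▸ measureReal_nonneg
  rcases le_total 0 t with ht | ht
  · calc (1 - stdGaussianCDF t) ^ 2 ≤ exp (-t ^ 2 / 2) ^ 2 :=
          pow_le_pow_left₀ h0 (one_sub_stdGaussianCDF_le_exp ht) 2
      _ = exp (-max t 0 ^ 2) := by rw [max_eq_left ht, ← exp_nat_mul]; ring_nf
  · have h1 : 1 - stdGaussianCDF t ≤ 1 := by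
      linarith [stdGaussianCDF_eq_measureReal t ▸ measureReal_nonneg (μ := gaussianReal 0 1)]
    simpa [max_eq_right ht] using pow_le_one₀ (n := 2) h0 h1

/-- Multiplied by `β`, the difference of the two sides is at least `((2αβ + 1)(a + s) - a)²`;
equality holds at `s = -2αβa/(2αβ + 1)`, `βQ = s²`. -/
theorem two_mul_sq_le_of_sq_le_mul {α β Q a s : ℝ} (hα : 0 ≤ α) (hβ : 0 ≤ β) (hQ : 0 ≤ Q)
    (ha : 0 ≤ a) (hs : s ^ 2 ≤ β * Q) :
    2 * α * a ^ 2 ≤ (2 * α * β + 1) * (Q + 2 * α * max (a + s) 0 ^ 2) := by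
  rcases le_total (a + s) 0 with hneg | hpos
  · rw [max_eq_right hneg]
    nlinarith [mul_le_mul_of_nonneg_left (show a ^ 2 ≤ s ^ 2 by nlinarith) hα]
  · rw [max_eq_left hpos]
    rcases hβ.eq_or_lt with rfl | hβ
    · obtain rfl : s = 0 := by nlinarith [sq_nonneg s]
      nlinarith
    · refine le_of_mul_le_mul_left ?_ hβ
      nlinarith [sq_nonneg ((2 * α * β + 1) * (a + s) - a), mul_nonneg hα hβ.le]

section Orthonormal

variable {R n : Type*} [CommRing R] [Fintype n] [DecidableEq n] {u : n → n → R}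

theorem sum_dotProduct_smul_eq_self (horth : ∀ i j, u i ⬝ᵥ u j = if i = j then 1 else 0)
    (x : n → R) : ∑ k, (x ⬝ᵥ u k) • u k = x := by
  have hU : of u * (of u)ᵀ = 1 := by
    ext i j
    simpa [mul_apply, dotProduct, one_apply] using horth i j
  calc ∑ k, (x ⬝ᵥ u k) • u k = ((of u)ᵀ * of u) *ᵥ x := by
        rw [← mulVec_mulVec]; ext i
        simp [mulVec, dotProduct, Finset.sum_apply, mul_comm]
    _ = x := by rw [mul_eq_one_comm.mp hU, one_mulVec]

theorem dotProduct_eq_sum_mul (horth : ∀ i j, u i ⬝ᵥ u j = if i = j then 1 else 0)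
    (x w : n → R) : x ⬝ᵥ w = ∑ k, (x ⬝ᵥ u k) * (w ⬝ᵥ u k) := by
  conv_lhs => rw [← sum_dotProduct_smul_eq_self horth x]
  simp [sum_dotProduct, dotProduct_comm w]

theorem dotProduct_mulVec_eq_sum (horth : ∀ i j, u i ⬝ᵥ u j = if i = j then 1 else 0)
    {H : Matrix n n R} {μ : n → R} (heig : ∀ k, H *ᵥ u k = μ k • u k) (x : n → R) :
    x ⬝ᵥ (H *ᵥ x) = ∑ k, μ k * (x ⬝ᵥ u k) ^ 2 := by
  nth_rewrite 2 [← sum_dotProduct_smul_eq_self horth x]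
  simp only [mulVec_sum, mulVec_smul, heig, dotProduct_sum, dotProduct_smul, smul_eq_mul]
  exact Finset.sum_congr rfl fun k _ => by ring

end Orthonormal

section Saddle

variable {n : Type*} [Fintype n] [DecidableEq n] {H : Matrix n n ℝ} {u : n → n → ℝ}
  {lam : n → ℝ} {o : n}

theorem dotProduct_mulVec_eq_neg_add_sum (horth : ∀ i j, u i ⬝ᵥ u j = if i = j then 1 else 0)
    (heig0 : H *ᵥ u o = (-lam o) • u o) (heig : ∀ k, k ≠ o → H *ᵥ u k = lam k • u k)
    (x : n → ℝ) :
    x ⬝ᵥ (H *ᵥ x) = -lam o * (x ⬝ᵥ u o) ^ 2 +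
      ∑ k ∈ Finset.univ.erase o, lam k * (x ⬝ᵥ u k) ^ 2 := by
  have heig' : ∀ k, H *ᵥ u k = Function.update lam o (-lam o) k • u k := by
    intro k
    rcases eq_or_ne k o with rfl | hk
    · simpa using heig0
    · simpa [hk] using heig k hk
  rw [dotProduct_mulVec_eq_sum horth heig', ← Finset.add_sum_erase _ _ (Finset.mem_univ o)]
  congr 1
  · simp
  · exact Finset.sum_congr rfl fun k hk => by simp [Finset.ne_of_mem_erase hk]

theorem dotProduct_eq_mul_add_sum (horth : ∀ i j, u i ⬝ᵥ u j = if i = j then 1 else 0)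
    (x v : n → ℝ) :
    x ⬝ᵥ v = (v ⬝ᵥ u o) * (x ⬝ᵥ u o) +
      ∑ k ∈ Finset.univ.erase o, (v ⬝ᵥ u k) * (x ⬝ᵥ u k) := by
  rw [dotProduct_eq_sum_mul horth, ← Finset.add_sum_erase _ _ (Finset.mem_univ o)]
  simp only [mul_comm]

variable (horth : ∀ i j, u i ⬝ᵥ u j = if i = j then 1 else 0)
  (heig0 : H *ᵥ u o = (-lam o) • u o) (heig : ∀ k, k ≠ o → H *ᵥ u k = lam k • u k)
  (hlam : ∀ k, 0 < lam k) {α : ℝ} (hα : 0 < α) {v : n → ℝ} (hv1 : 0 < v ⬝ᵥ u o)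
  (hvrel : (v ⬝ᵥ u o) ^ 2 / lam o =
    ∑ k ∈ Finset.univ.erase o, (v ⬝ᵥ u k) ^ 2 / lam k + 1 / α)
include horth heig0 heig hlam hα hv1 hvrel

theorem neg_half_mul_dotProduct_mulVec_sub_le {N e : ℝ} (hN : 0 ≤ N) (he : 0 ≤ e)
    {x : n → ℝ} (hx : e / 2 ≤ x ⬝ᵥ u o) :
    -N / 2 * (x ⬝ᵥ (H *ᵥ x)) - α * N * max (x ⬝ᵥ v) 0 ^ 2 ≤
      -(lam o / (2 * α * ∑ k ∈ Finset.univ.erase o, (v ⬝ᵥ u k) ^ 2 / lam k + 1) / 8) *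
        N * e ^ 2 := by
  set β := ∑ k ∈ Finset.univ.erase o, (v ⬝ᵥ u k) ^ 2 / lam k
  set Q := ∑ k ∈ Finset.univ.erase o, lam k * (x ⬝ᵥ u k) ^ 2
  set s := ∑ k ∈ Finset.univ.erase o, (v ⬝ᵥ u k) * (x ⬝ᵥ u k)
  set y := x ⬝ᵥ u o
  have hβ : 0 ≤ β := Finset.sum_nonneg fun k _ => div_nonneg (sq_nonneg _) (hlam k).le
  have hQ : 0 ≤ Q := Finset.sum_nonneg fun k _ => mul_nonneg (hlam k).le (sq_nonneg _)
  have hs : s ^ 2 ≤ β * Q := Finset.sum_sq_le_sum_mul_sum_of_sq_le_mul _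
    (fun k _ => div_nonneg (sq_nonneg _) (hlam k).le)
    (fun k _ => mul_nonneg (hlam k).le (sq_nonneg _))
    (fun k _ => by field_simp [(hlam k).ne']; rfl)
  have hv : α * (v ⬝ᵥ u o) ^ 2 = lam o * (α * β + 1) := by
    field_simp [(hlam o).ne', hα.ne'] at hvrel
    linarith
  have hmin := two_mul_sq_le_of_sq_le_mul hα.le hβ hQ (a := (v ⬝ᵥ u o) * y)
    (mul_nonneg hv1.le (by linarith)) hs
  have hD : 0 < 2 * α * β + 1 := by positivity
  have hexp : lam o * y ^ 2 - Q - 2 * α * max (x ⬝ᵥ v) 0 ^ 2 ≤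
      -(lam o / (2 * α * β + 1)) * y ^ 2 := by
    rw [neg_mul, div_mul_eq_mul_div, ← neg_div, le_div_iff₀ hD,
      dotProduct_eq_mul_add_sum horth (o := o)]
    nlinarith [congrArg (· * y ^ 2) hv]
  have hy : e ^ 2 ≤ 4 * y ^ 2 := by nlinarith
  have hκ : 0 ≤ lam o / (2 * α * β + 1) := div_nonneg (hlam o).le hD.le
  rw [dotProduct_mulVec_eq_neg_add_sum horth heig0 heig]
  nlinarith [mul_le_mul_of_nonneg_left hexp hN, mul_le_mul_of_nonneg_left hy (mul_nonneg hκ hN)]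

theorem exp_mul_one_sub_stdGaussianCDF_sq_le {N e : ℝ} (hN : 0 ≤ N) (he : 0 ≤ e) {x : n → ℝ}
    (hx : e / 2 ≤ x ⬝ᵥ u o) :
    exp (-N / 2 * (x ⬝ᵥ (H *ᵥ x))) * (1 - stdGaussianCDF (√(α * N) * (x ⬝ᵥ v))) ^ 2 ≤
      exp (-(lam o / (2 * α * ∑ k ∈ Finset.univ.erase o, (v ⬝ᵥ u k) ^ 2 / lam k + 1) / 8) *
        N * e ^ 2) := by
  have hmax : max (√(α * N) * (x ⬝ᵥ v)) 0 ^ 2 = α * N * max (x ⬝ᵥ v) 0 ^ 2 := by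
    have := mul_max_of_nonneg (x ⬝ᵥ v) 0 (sqrt_nonneg (α * N))
    rw [mul_zero] at this
    rw [← this, mul_pow, sq_sqrt (by positivity)]
  calc exp (-N / 2 * (x ⬝ᵥ (H *ᵥ x))) * (1 - stdGaussianCDF (√(α * N) * (x ⬝ᵥ v))) ^ 2
      ≤ exp (-N / 2 * (x ⬝ᵥ (H *ᵥ x))) * exp (-max (√(α * N) * (x ⬝ᵥ v)) 0 ^ 2) := by
        gcongr; exact one_sub_stdGaussianCDF_sq_le _
    _ = exp (-N / 2 * (x ⬝ᵥ (H *ᵥ x)) - α * N * max (x ⬝ᵥ v) 0 ^ 2) := by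
        rw [← exp_add, hmax, sub_eq_add_neg]
    _ ≤ _ := exp_le_exp.mpr
        (neg_half_mul_dotProduct_mulVec_sub_le horth heig0 heig hlam hα hv1 hvrel hN he hx)

end Saddle

theorem eventually_div_natCast_le_half {ε : ℕ → ℝ} (hε : ∀ N, 0 < ε N)
    (h1 : Tendsto (fun N : ℕ => (N : ℝ) * ε N ^ 2) atTop atTop)
    (h2 : Tendsto (fun N : ℕ => (N : ℝ) * ε N ^ 3) atTop (nhds 0)) (r : ℝ) :
    ∀ᶠ N : ℕ in atTop, r / N ≤ ε N / 2 := by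
  filter_upwards [h1.eventually_ge_atTop (max 1 (2 * r)), h2.eventually_lt_const one_pos]
    with N hlarge hsmall
  have hpos := hε N
  have hN : (0 : ℝ) < N := by nlinarith [le_max_left 1 (2 * r)]
  have hε1 : ε N ≤ 1 := by nlinarith [le_max_left 1 (2 * r)]
  rw [div_le_iff₀ hN]
  nlinarith [le_max_right 1 (2 * r), mul_le_mul_of_nonneg_left hε1 (mul_pos hN hpos).le]

theorem equilibrium_potential_boundary_estimate_general {d : ℕ} [NeZero d]
    (H : Matrix (Fin d) (Fin d) ℝ)
    (u : Fin d → Fin d → ℝ) (lam : Fin d → ℝ) (hlam : ∀ k, 0 < lam k)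
    (horth : ∀ i j, u i ⬝ᵥ u j = if i = j then (1 : ℝ) else 0)
    (heig0 : H *ᵥ u 0 = (-(lam 0)) • u 0)
    (heig : ∀ k, k ≠ 0 → H *ᵥ u k = lam k • u k)
    (α : ℝ) (hα : 0 < α) (v : Fin d → ℝ) (hv1 : 0 < v ⬝ᵥ u 0)
    (hvrel : (v ⬝ᵥ u 0) ^ 2 / lam 0 =
      ∑ k ∈ Finset.univ.erase 0, (v ⬝ᵥ u k) ^ 2 / lam k + 1 / α)
    (ε : ℕ → ℝ) (hε : ∀ N, 0 < ε N)
    (h1 : Tendsto (fun N : ℕ => (N : ℝ) * ε N ^ 2) atTop atTop)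
    (h2 : Tendsto (fun N : ℕ => (N : ℝ) * ε N ^ 3) atTop (nhds 0)) :
    ∀ r : ℝ, 0 < r → ∃ (c₀ C₀ : ℝ) (N₀ : ℕ), 0 < c₀ ∧
      ∀ N : ℕ, N₀ ≤ N →
        (∀ x : Fin d → ℝ, |x ⬝ᵥ u 0 - ε N| ≤ r / N →
          Real.exp (-(N : ℝ) / 2 * (x ⬝ᵥ (H *ᵥ x))) *
            (1 - stdGaussianCDF (Real.sqrt (α * N) * (x ⬝ᵥ v))) ^ 2 ≤
          C₀ * Real.exp (-c₀ * N * ε N ^ 2)) ∧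
        (∀ x : Fin d → ℝ, |x ⬝ᵥ u 0 + ε N| ≤ r / N →
          Real.exp (-(N : ℝ) / 2 * (x ⬝ᵥ (H *ᵥ x))) *
            (stdGaussianCDF (Real.sqrt (α * N) * (x ⬝ᵥ v))) ^ 2 ≤
          C₀ * Real.exp (-c₀ * N * ε N ^ 2)) := by
  intro r _
  obtain ⟨N₀, hN₀⟩ := eventually_atTop.mp (eventually_div_natCast_le_half hε h1 h2 r)
  have hβ : 0 ≤ ∑ k ∈ Finset.univ.erase 0, (v ⬝ᵥ u k) ^ 2 / lam k :=
    Finset.sum_nonneg fun k _ => div_nonneg (sq_nonneg _) (hlam k).le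
  refine ⟨lam 0 / (2 * α * ∑ k ∈ Finset.univ.erase 0, (v ⬝ᵥ u k) ^ 2 / lam k + 1) / 8, 1, N₀,
    div_pos (div_pos (hlam 0) (by linarith [mul_nonneg hα.le hβ])) (by norm_num),
    fun N hN => ⟨fun x hx => ?_, fun x hx => ?_⟩⟩
  · rw [one_mul]
    refine exp_mul_one_sub_stdGaussianCDF_sq_le horth heig0 heig hlam hα hv1 hvrel
      N.cast_nonneg (hε N).le ?_
    linarith [abs_le.mp hx, hN₀ N hN]
  · have h := exp_mul_one_sub_stdGaussianCDF_sq_le horth heig0 heig hlam hα hv1 hvrel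
      N.cast_nonneg (hε N).le (x := -x)
      (by rw [neg_dotProduct]; linarith [abs_le.mp hx, hN₀ N hN])
    rw [one_mul]
    rwa [mulVec_neg, dotProduct_neg, neg_dotProduct, neg_neg, neg_dotProduct, mul_neg,
      stdGaussianCDF_neg, sub_sub_cancel] at h

/-- Quantitative core of the paper's Lemma 3.7 (display (3.9)): on the lateral
boundary pieces `x·u₁ = ±ε_N + O(1/N)`, the Gaussian approximation
`V_N(x) = Φ(√(αN) x·v)` of the equilibrium potential is exponentially close to
`1` (resp. `0`), weighted by `e^{-(N/2) xᵀHx}`. -/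
theorem equilibrium_potential_boundary_estimate {d : ℕ} [NeZero d]
    (H : Matrix (Fin d) (Fin d) ℝ) (hH : H.IsSymm)
    (u : Fin d → Fin d → ℝ) (lam : Fin d → ℝ) (hlam : ∀ k, 0 < lam k)
    (horth : ∀ i j, u i ⬝ᵥ u j = if i = j then (1 : ℝ) else 0)
    (heig0 : H *ᵥ u 0 = (-(lam 0)) • u 0)
    (heig : ∀ k, k ≠ 0 → H *ᵥ u k = lam k • u k)
    (α : ℝ) (hα : 0 < α) (v : Fin d → ℝ) (hv1 : 0 < v ⬝ᵥ u 0)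
    (hvrel : (v ⬝ᵥ u 0) ^ 2 / lam 0 =
      ∑ k ∈ Finset.univ.erase 0, (v ⬝ᵥ u k) ^ 2 / lam k + 1 / α)
    (ε : ℕ → ℝ) (hε : ∀ N, 0 < ε N)
    (h1 : Tendsto (fun N : ℕ => (N : ℝ) * ε N ^ 2) atTop atTop)
    (h2 : Tendsto (fun N : ℕ => (N : ℝ) * ε N ^ 3) atTop (nhds 0)) :
    ∀ r : ℝ, 0 < r → ∃ (c₀ C₀ : ℝ) (N₀ : ℕ), 0 < c₀ ∧
      ∀ N : ℕ, N₀ ≤ N →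
        (∀ x : Fin d → ℝ, |x ⬝ᵥ u 0 - ε N| ≤ r / N →
          Real.exp (-(N : ℝ) / 2 * (x ⬝ᵥ (H *ᵥ x))) *
            (1 - stdGaussianCDF (Real.sqrt (α * N) * (x ⬝ᵥ v))) ^ 2 ≤
          C₀ * Real.exp (-c₀ * N * ε N ^ 2)) ∧
        (∀ x : Fin d → ℝ, |x ⬝ᵥ u 0 + ε N| ≤ r / N →
          Real.exp (-(N : ℝ) / 2 * (x ⬝ᵥ (H *ᵥ x))) *
            (stdGaussianCDF (Real.sqrt (α * N) * (x ⬝ᵥ v))) ^ 2 ≤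
          C₀ * Real.exp (-c₀ * N * ε N ^ 2)) :=
  equilibrium_potential_boundary_estimate_general H u lam hlam horth heig0 heig α hα v hv1 hvrel ε
    hε h1 h2
end

section
/- Let H be a real symmetric d×d matrix with orthonormal eigenvectors u₁, …, u_d and eigenvalues −λ₁, λ₂, …, λ_d, where λ₁, …, λ_d > 0. Let α > 0 and v ∈ ℝᵈ with coordinates v_k = v·u_k satisfying v₁ > 0 and v₁²/λ₁ = ∑_{k=2}^d v_k²/λ_k + 1/α. Then: (i) there exists δ ∈ (0, v₁) such that (v₁²/λ₁ − 1/α)(λ₁ + δ) < (v₁ − δ)²; and (ii) for any such δ, every x ∈ ℝᵈ with x·u₁ = 1 satisfies x·v ≥ δ or xᵀHx ≥ δ. -/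
/-!
Expand in the orthonormal eigenbasis with coordinates `a k = x·u k`, `b k = v·u k`, and let `∑'`
denote a sum over `k ≠ 0`. On the hyperplane `a 0 = 1` we get `x·v = v₁ + ∑' a k b k` and
`xᵀHx = -λ₁ + ∑' λ k (a k)²`. By the weighted Cauchy–Schwarz inequality
`(∑' a k b k)² ≤ (∑' λ k (a k)²) (∑' (b k)²/λ k)`, and the last factor is `v₁²/λ₁ - 1/α`.
So if both `x·v < δ` and `xᵀHx < δ`, then `(v₁ - δ)² < (∑' a k b k)² ≤ (λ₁ + δ)(v₁²/λ₁ - 1/α)`,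
contradicting the choice of `δ`. Such a `δ` exists because at `δ = 0` the defining inequality
reads `v₁² - λ₁/α < v₁²`, and it persists for small `δ > 0` by continuity.
-/

open Matrix Filter Topology

lemma exists_pos_lt_and_mul_add_lt_sub_sq {c l v : ℝ} (hv : 0 < v) (h : c * l < v ^ 2) :
    ∃ δ, 0 < δ ∧ δ < v ∧ c * (l + δ) < (v - δ) ^ 2 := by
  have hlim : ∀ᶠ δ in 𝓝 (0 : ℝ), δ < v ∧ c * (l + δ) < (v - δ) ^ 2 := by
    refine (tendsto_id.eventually_lt tendsto_const_nhds hv).and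
      (Tendsto.eventually_lt ?_ ?_ (by simpa using h))
    · exact Continuous.tendsto' (by fun_prop) 0 _ (by simp)
    · exact Continuous.tendsto' (by fun_prop) 0 _ (by simp)
  have hright : ∀ᶠ δ in 𝓝[>] (0 : ℝ), 0 < δ := self_mem_nhdsWithin
  obtain ⟨δ, ⟨hδv, hδ⟩, hδ0⟩ := ((eventually_nhdsWithin_of_eventually_nhds hlim).and hright).exists
  exact ⟨δ, hδ0, hδv, hδ⟩

lemma sq_sum_mul_le_sum_mul_sq_mul_sum_sq_div {ι : Type*} (s : Finset ι) {w a b : ι → ℝ}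
    (hw : ∀ i ∈ s, 0 < w i) :
    (∑ i ∈ s, a i * b i) ^ 2 ≤ (∑ i ∈ s, w i * a i ^ 2) * ∑ i ∈ s, b i ^ 2 / w i := by
  refine Finset.sum_sq_le_sum_mul_sum_of_sq_le_mul s
    (fun i hi => by have := hw i hi; positivity) (fun i hi => by have := hw i hi; positivity)
    fun i hi => le_of_eq ?_
  field_simp [(hw i hi).ne']

section OrthonormalBasis

variable {R n : Type*} [CommRing R] [Fintype n] [DecidableEq n] {u : n → n → R}

lemma dotProduct_eq_sum_of_orthonormal (hu : ∀ i j, u i ⬝ᵥ u j = if i = j then 1 else 0)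
    (a b : n → R) : a ⬝ᵥ b = ∑ k, (a ⬝ᵥ u k) * (b ⬝ᵥ u k) := by
  have hU : of u * (of u)ᵀ = 1 := by
    ext i j
    simpa [mul_apply, one_apply, dotProduct] using hu i j
  calc a ⬝ᵥ b = a ⬝ᵥ (((of u)ᵀ * of u) *ᵥ b) := by rw [mul_eq_one_comm.mp hU, one_mulVec]
    _ = (of u *ᵥ a) ⬝ᵥ (of u *ᵥ b) := by
      rw [← mulVec_mulVec, dotProduct_mulVec, vecMul_transpose]
    _ = ∑ k, (a ⬝ᵥ u k) * (b ⬝ᵥ u k) := by simp only [dotProduct, mulVec, of_apply, mul_comm]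

omit [DecidableEq n] in
lemma mulVec_dotProduct_of_mulVec_eq_smul {H : Matrix n n R} (hH : H.IsSymm) {w : n → R} {μ : R}
    (hw : H *ᵥ w = μ • w) (x : n → R) : (H *ᵥ x) ⬝ᵥ w = μ * (x ⬝ᵥ w) := by
  rw [dotProduct_comm, dotProduct_mulVec, ← mulVec_transpose, hH.eq, hw, smul_dotProduct,
    smul_eq_mul, dotProduct_comm]

lemma dotProduct_mulVec_self_eq_sum_of_orthonormal
    (hu : ∀ i j, u i ⬝ᵥ u j = if i = j then 1 else 0) {H : Matrix n n R} (hH : H.IsSymm)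
    {μ : n → R} (heig : ∀ k, H *ᵥ u k = μ k • u k) (x : n → R) :
    x ⬝ᵥ (H *ᵥ x) = ∑ k, μ k * (x ⬝ᵥ u k) ^ 2 := by
  rw [dotProduct_eq_sum_of_orthonormal hu]
  refine Finset.sum_congr rfl fun k _ => ?_
  rw [mulVec_dotProduct_of_mulVec_eq_smul hH (heig k)]
  ring

end OrthonormalBasis

lemma le_or_le_of_sum_sq_div_mul_lt {ι : Type*} (s : Finset ι) {w a b : ι → ℝ}
    (hw : ∀ i ∈ s, 0 < w i) {l v δ : ℝ} (hδ : δ < v)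
    (h : (∑ i ∈ s, b i ^ 2 / w i) * (l + δ) < (v - δ) ^ 2) :
    δ ≤ v + ∑ i ∈ s, a i * b i ∨ δ ≤ -l + ∑ i ∈ s, w i * a i ^ 2 := by
  by_contra! ⟨hab, hwa⟩
  have hc : 0 ≤ ∑ i ∈ s, b i ^ 2 / w i :=
    Finset.sum_nonneg fun i hi => by have := hw i hi; positivity
  have hsq : (v - δ) ^ 2 < (∑ i ∈ s, a i * b i) ^ 2 := by nlinarith
  have := calc
    (v - δ) ^ 2 < (∑ i ∈ s, a i * b i) ^ 2 := hsq
    _ ≤ (∑ i ∈ s, w i * a i ^ 2) * ∑ i ∈ s, b i ^ 2 / w i :=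
      sq_sum_mul_le_sum_mul_sq_mul_sum_sq_div s hw
    _ ≤ (l + δ) * ∑ i ∈ s, b i ^ 2 / w i := mul_le_mul_of_nonneg_right (by linarith) hc
    _ < (v - δ) ^ 2 := by rwa [mul_comm]
  exact lt_irrefl _ this

/-- Geometric dichotomy from the proof of the paper's Lemma 3.7: there is
`δ ∈ (0, v₁)` with `(v₁²/λ₁ - 1/α)(λ₁ + δ) < (v₁ - δ)²`, and for any such `δ`,
every `x` with `x·u₁ = 1` satisfies `x·v ≥ δ` or `xᵀHx ≥ δ`. -/
theorem saddle_hyperplane_dichotomy {d : ℕ} [NeZero d]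
    (H : Matrix (Fin d) (Fin d) ℝ) (hH : H.IsSymm)
    (u : Fin d → Fin d → ℝ) (lam : Fin d → ℝ) (hlam : ∀ k, 0 < lam k)
    (horth : ∀ i j, u i ⬝ᵥ u j = if i = j then (1 : ℝ) else 0)
    (heig0 : H *ᵥ u 0 = (-(lam 0)) • u 0)
    (heig : ∀ k, k ≠ 0 → H *ᵥ u k = lam k • u k)
    (α : ℝ) (hα : 0 < α) (v : Fin d → ℝ) (hv1 : 0 < v ⬝ᵥ u 0)
    (hvrel : (v ⬝ᵥ u 0) ^ 2 / lam 0 =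
      ∑ k ∈ Finset.univ.erase 0, (v ⬝ᵥ u k) ^ 2 / lam k + 1 / α) :
    (∃ δ : ℝ, 0 < δ ∧ δ < v ⬝ᵥ u 0 ∧
      ((v ⬝ᵥ u 0) ^ 2 / lam 0 - 1 / α) * (lam 0 + δ) < (v ⬝ᵥ u 0 - δ) ^ 2) ∧
    ∀ δ : ℝ, 0 < δ → δ < v ⬝ᵥ u 0 →
      ((v ⬝ᵥ u 0) ^ 2 / lam 0 - 1 / α) * (lam 0 + δ) < (v ⬝ᵥ u 0 - δ) ^ 2 →
      ∀ x : Fin d → ℝ, x ⬝ᵥ u 0 = 1 →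
        δ ≤ x ⬝ᵥ v ∨ δ ≤ x ⬝ᵥ (H *ᵥ x) := by
  refine ⟨exists_pos_lt_and_mul_add_lt_sub_sq hv1 ?_, fun δ _ hδv hδ x hx => ?_⟩
  · have hl := hlam 0
    have hcl : ((v ⬝ᵥ u 0) ^ 2 / lam 0 - 1 / α) * lam 0 = (v ⬝ᵥ u 0) ^ 2 - lam 0 / α := by
      field_simp
    rw [hcl]
    linarith [div_pos hl hα]
  rw [hvrel, add_sub_cancel_right] at hδ
  have hxv : x ⬝ᵥ v = v ⬝ᵥ u 0 + ∑ k ∈ Finset.univ.erase 0, (x ⬝ᵥ u k) * (v ⬝ᵥ u k) := by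
    rw [dotProduct_eq_sum_of_orthonormal horth, ← Finset.add_sum_erase _ _ (Finset.mem_univ 0),
      hx, one_mul]
  have heig_all : ∀ k, H *ᵥ u k = Function.update lam 0 (-lam 0) k • u k := by
    intro k
    rcases eq_or_ne k 0 with rfl | hk
    · rwa [Function.update_self]
    · rw [Function.update_of_ne hk, heig k hk]
  have hxHx : x ⬝ᵥ (H *ᵥ x) = -lam 0 + ∑ k ∈ Finset.univ.erase 0, lam k * (x ⬝ᵥ u k) ^ 2 := by
    rw [dotProduct_mulVec_self_eq_sum_of_orthonormal horth hH heig_all,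
      ← Finset.add_sum_erase _ _ (Finset.mem_univ 0), Function.update_self, hx, one_pow, mul_one]
    congr 1
    exact Finset.sum_congr rfl fun k hk => by rw [Function.update_of_ne (Finset.ne_of_mem_erase hk)]
  rw [hxv, hxHx]
  exact le_or_le_of_sum_sq_div_mul_lt _ (fun k _ => hlam k) hδv hδ
end

section
/- Let V be a finite set, let c : V × V → ℝ be symmetric and nonnegative (c(x,y) = c(y,x) ≥ 0), and let φ : V × V → ℝ be antisymmetric (φ(x,y) = −φ(y,x)) with φ(x,y) = 0 whenever c(x,y) = 0. Let E ⊆ V. Then, with the convention that a term with zero denominator and zero numerator is 0, (1/2) ∑_{x ∉ E} ∑_{y ∉ E} φ(x,y)²/c(x,y) + ∑_{x ∉ E} (∑_{z ∈ E} φ(x,z))² / (∑_{z ∈ E} c(x,z)) ≤ (1/2) ∑_{x ∈ V} ∑_{y ∈ V} φ(x,y)²/c(x,y). -/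
/-! Split the energy `½ ∑ φ²/c` into the blocks `Eᶜ × Eᶜ`, `Eᶜ × E`, `E × Eᶜ`, `E × E`. The two cross
blocks coincide by the symmetry of `φ²/c`, so the energy is `½ (Eᶜ × Eᶜ) + (Eᶜ × E) + ½ (E × E)`.
Collapsing keeps the first block, drops the nonnegative last one, and replaces each row
`∑_{z ∈ E} φ(x,z)²/c(x,z)` of the cross block by `(∑_{z ∈ E} φ(x,z))² / ∑_{z ∈ E} c(x,z)`, which is
smaller by Sedrakyan's form of Cauchy–Schwarz. -/

open Finset

/-- Sedrakyan's lemma; the convention `a / 0 = 0` is harmless since `f` vanishes wherever `g` does. -/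
theorem Finset.sq_sum_div_le_sum_sq_div_of_nonneg {ι R : Type*} [Semifield R] [LinearOrder R]
    [IsStrictOrderedRing R] [ExistsAddOfLE R] (s : Finset ι) {f g : ι → R}
    (hg : ∀ i ∈ s, 0 ≤ g i) (hfg : ∀ i ∈ s, g i = 0 → f i = 0) :
    (∑ i ∈ s, f i) ^ 2 / ∑ i ∈ s, g i ≤ ∑ i ∈ s, f i ^ 2 / g i := by
  have hterm : ∀ i ∈ s, 0 ≤ f i ^ 2 / g i := fun i hi ↦ div_nonneg (sq_nonneg _) (hg i hi)
  refine div_le_of_le_mul₀ (sum_nonneg hg) (sum_nonneg hterm)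
    (sum_sq_le_sum_mul_sum_of_sq_le_mul s hterm hg fun i hi ↦ ?_)
  rcases eq_or_ne (g i) 0 with hgi | hgi
  · simp [hgi, hfg i hi hgi]
  · rw [div_mul_cancel₀ _ hgi]

theorem Finset.sum_sum_eq_compl_add_two_nsmul_add {V M : Type*} [Fintype V] [DecidableEq V]
    [AddCommMonoid M] {f : V → V → M} (hf : ∀ x y, f x y = f y x) (E : Finset V) :
    ∑ x, ∑ y, f x y =
      ∑ x ∈ Eᶜ, ∑ y ∈ Eᶜ, f x y + 2 • ∑ x ∈ Eᶜ, ∑ y ∈ E, f x y + ∑ x ∈ E, ∑ y ∈ E, f x y := by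
  have hcross : ∑ x ∈ E, ∑ y ∈ Eᶜ, f x y = ∑ x ∈ Eᶜ, ∑ y ∈ E, f x y := by
    rw [sum_comm]
    simp only [hf]
  rw [← sum_add_sum_compl E]
  simp only [← sum_add_sum_compl E (f _), sum_add_distrib, hcross, two_nsmul]
  abel

/-- Paper's Lemma 8.1: collapsing a set `E` of the state space does not increase
the flow norm.  Here `c` is the symmetrized conductance, `φ` an antisymmetric
flow vanishing on edges of zero conductance; division by zero is zero in Lean,
in accordance with the convention `0/0 = 0`. -/
theorem collapsed_flow_norm_le {V : Type*} [Fintype V] [DecidableEq V]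
    (c φ : V → V → ℝ)
    (hc_symm : ∀ x y, c x y = c y x) (hc_nonneg : ∀ x y, 0 ≤ c x y)
    (hφ_anti : ∀ x y, φ x y = -φ y x)
    (hφ_supp : ∀ x y, c x y = 0 → φ x y = 0)
    (E : Finset V) :
    (1 / 2) * (∑ x ∈ Eᶜ, ∑ y ∈ Eᶜ, φ x y ^ 2 / c x y) +
      ∑ x ∈ Eᶜ, (∑ z ∈ E, φ x z) ^ 2 / (∑ z ∈ E, c x z) ≤
    (1 / 2) * ∑ x : V, ∑ y : V, φ x y ^ 2 / c x y := by
  have henergy_symm : ∀ x y, φ x y ^ 2 / c x y = φ y x ^ 2 / c y x := fun x y ↦ by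
    rw [hφ_anti x y, hc_symm x y, neg_sq]
  have hcollapse : ∑ x ∈ Eᶜ, (∑ z ∈ E, φ x z) ^ 2 / (∑ z ∈ E, c x z) ≤
      ∑ x ∈ Eᶜ, ∑ z ∈ E, φ x z ^ 2 / c x z :=
    sum_le_sum fun x _ ↦ E.sq_sum_div_le_sum_sq_div_of_nonneg (fun z _ ↦ hc_nonneg x z)
      fun z _ ↦ hφ_supp x z
  have hinner : 0 ≤ ∑ x ∈ E, ∑ y ∈ E, φ x y ^ 2 / c x y :=
    sum_nonneg fun x _ ↦ sum_nonneg fun y _ ↦ div_nonneg (sq_nonneg _) (hc_nonneg x y)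
  rw [sum_sum_eq_compl_add_two_nsmul_add henergy_symm E, two_nsmul]
  linarith
end
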